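/- arXiv:2308.14891 — 2 statements merged into one kernel-verified Lean document; each statement's English description precedes it below -/
import Mathlib

section
/- Let d ≥ 2 be an integer and a = (a_1, …, a_n) an inertia type for d (i.e. 0 < a_i < d, d divides Σ a_i). For 1 ≤ j ≤ d-1 define f_j = -1 + Σ_{i=1}^n ⟨-j·a_i/d⟩, where ⟨x⟩ denotes the fractional part of a rational number x. Then Σ_{j=1}^{d-1} f_j = 1 - d + (1/2)·Σ_{i=1}^n (d - gcd(d, a_i)). In other words, the signature dimensions sum to the genus given by Riemann–Hurwitz. -/
open Finset

lemma fract_zero_iff (d j a : ℕ) (hd : 0 < d) :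
    Int.fract ((j : ℚ) * a / d) = 0 ↔ d ∣ j * a := by
  have h : ((j : ℚ) * a / d) = (((j * a : ℕ) : ℤ) : ℚ) / (d : ℕ) := by push_cast; ring
  rw [h, Int.fract_div_intCast_eq_div_intCast_mod, div_eq_zero_iff]
  have hd' : ((d : ℚ)) ≠ 0 := by positivity
  simp only [hd', or_false, Int.cast_eq_zero]
  constructor
  · intro h'; exact_mod_cast Int.dvd_of_emod_eq_zero h'
  · intro h'; exact Int.emod_eq_zero_of_dvd (by exact_mod_cast h')

lemma key (d a : ℕ) (hd : 2 ≤ d) (ha : 0 < a) (hlt : a < d) :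
    ∑ j ∈ Finset.Icc 1 (d - 1), Int.fract (-(j : ℚ) * a / d)
      = ((d : ℚ) - Nat.gcd d a) / 2 := by
  set g := Nat.gcd d a with hg
  have hg0 : 0 < g := Nat.gcd_pos_of_pos_left a (by omega)
  set m := d / g with hm
  have hgd : g ∣ d := Nat.gcd_dvd_left d a
  have hag : g ∣ a := Nat.gcd_dvd_right d a
  have hdm : d = m * g := by rw [hm, Nat.div_mul_cancel hgd]
  have hgle : g ≤ d := Nat.le_of_dvd (by omega) hgd
  have hm0 : 0 < m := Nat.div_pos hgle hg0
  have hS : ∀ j ∈ Finset.Icc 1 (d-1),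
      Int.fract (-(j : ℚ) * a / d) = Int.fract (((d - j : ℕ) : ℚ) * a / d) := by
    intro j hj
    simp only [mem_Icc] at hj
    have hjd : j ≤ d := by omega
    have hcast : ((d - j : ℕ) : ℚ) = (d : ℚ) - j := by push_cast [Nat.cast_sub hjd]; ring
    rw [hcast]
    have : ((d : ℚ) - j) * a / d = (-(j:ℚ) * a / d) + (a : ℤ) := by
      have hd' : (d : ℚ) ≠ 0 := by positivity
      push_cast; field_simp; ring
    rw [this, Int.fract_add_intCast]
  rw [Finset.sum_congr rfl hS]
  have hrefl : ∑ j ∈ Finset.Icc 1 (d-1), Int.fract (((d - j : ℕ) : ℚ) * a / d)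
      = ∑ j ∈ Finset.Icc 1 (d-1), Int.fract ((j : ℚ) * a / d) := by
    apply Finset.sum_nbij' (fun j => d - j) (fun j => d - j)
    · intro j hj; simp only [mem_Icc] at *; omega
    · intro j hj; simp only [mem_Icc] at *; omega
    · intro j hj; simp only [mem_Icc] at hj; omega
    · intro j hj; simp only [mem_Icc] at hj; omega
    · intro j hj; rfl
  rw [hrefl]
  set T := ∑ j ∈ Finset.Icc 1 (d-1), Int.fract ((j : ℚ) * a / d) with hT
  have hTS : T = ∑ j ∈ Finset.Icc 1 (d-1), Int.fract (-((j : ℚ) * a / d)) := by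
    rw [← hrefl]
    apply Finset.sum_congr rfl
    intro j hj
    rw [← hS j hj]
    congr 1; ring
  have hpair : 2 * T = ∑ j ∈ Finset.Icc 1 (d-1),
      (if d ∣ j * a then (0:ℚ) else 1) := by
    have h2 : 2 * T = ∑ j ∈ Finset.Icc 1 (d-1),
        (Int.fract ((j : ℚ) * a / d) + Int.fract (-((j : ℚ) * a / d))) := by
      rw [Finset.sum_add_distrib, ← hT, ← hTS]; ring
    rw [h2]
    apply Finset.sum_congr rfl
    intro j hj
    by_cases h : d ∣ j * a
    · rw [if_pos h]
      have h0 : Int.fract ((j : ℚ) * a / d) = 0 := (fract_zero_iff d j a (by omega)).mpr h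
      rw [h0, Int.fract_neg_eq_zero.mpr h0]; ring
    · rw [if_neg h]
      have h0 : Int.fract ((j : ℚ) * a / d) ≠ 0 :=
        fun hh => h ((fract_zero_iff d j a (by omega)).mp hh)
      rw [Int.fract_neg h0]; ring
  have hdvd_iff : ∀ j, d ∣ j * a ↔ m ∣ j := by
    intro j
    have hcop : Nat.Coprime m (a / g) := by
      rw [hm]; exact Nat.coprime_div_gcd_div_gcd hg0
    constructor
    · intro h
      have h1 : m * g ∣ j * (a/g) * g := by
        rw [mul_assoc, Nat.div_mul_cancel hag, ← hdm]; exact h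
      have h2 : m ∣ j * (a/g) := (Nat.mul_dvd_mul_iff_right hg0).mp h1
      exact hcop.dvd_of_dvd_mul_right h2
    · intro h
      obtain ⟨k, rfl⟩ := h
      rw [hdm]
      exact dvd_trans (mul_dvd_mul_left m hag) ⟨k, by ring⟩
  have hcount : #{j ∈ Finset.Icc 1 (d-1) | d ∣ j * a} = g - 1 := by
    have he : {j ∈ Finset.Icc 1 (d-1) | d ∣ j * a} = {j ∈ Finset.Ioc 0 (d-1) | m ∣ j} := by
      ext j; simp only [mem_filter, mem_Icc, mem_Ioc, hdvd_iff]; omega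
    rw [he, Nat.Ioc_filter_dvd_card_eq_div]
    obtain ⟨g', hg'⟩ : ∃ g', g = g' + 1 := ⟨g-1, by omega⟩
    have h1 : d - 1 = m * g' + (m - 1) := by
      rw [hdm, hg', Nat.mul_add, Nat.mul_one]; omega
    rw [h1, Nat.mul_add_div hm0, Nat.div_eq_of_lt (by omega)]
    omega
  have hcard2 : #{j ∈ Finset.Icc 1 (d-1) | ¬ d ∣ j * a} = d - g := by
    have := Finset.card_filter_add_card_filter_not
      (s := Finset.Icc 1 (d-1)) (p := fun j => d ∣ j * a)
    rw [hcount, Nat.card_Icc] at this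
    omega
  have hsum : ∑ j ∈ Finset.Icc 1 (d-1), (if d ∣ j * a then (0:ℚ) else 1)
      = (d : ℚ) - g := by
    rw [Finset.sum_ite, Finset.sum_const, Finset.sum_const, smul_zero, zero_add,
      nsmul_eq_mul, mul_one, hcard2, Nat.cast_sub hgle]
  have : 2 * T = (d:ℚ) - g := by rw [hpair, hsum]
  linarith

/-- The signature dimensions `f_j = -1 + Σ_i ⟨-j·aᵢ/d⟩` sum, over
`1 ≤ j ≤ d-1`, to the Riemann–Hurwitz genus `1 - d + (1/2)·Σ_i (d - gcd(d, aᵢ))`. -/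
theorem stmt1 (d n : ℕ) (hd : 2 ≤ d) (a : Fin n → ℕ)
    (hpos : ∀ i, 0 < a i) (hlt : ∀ i, a i < d)
    (hdvd : d ∣ ∑ i, a i) :
    ∑ j ∈ Finset.Icc 1 (d - 1), ((-1 : ℚ) + ∑ i, Int.fract (-(j : ℚ) * (a i) / d))
      = 1 - d + (1/2) * ∑ i, ((d : ℚ) - Nat.gcd d (a i)) := by
  rw [Finset.sum_add_distrib, Finset.sum_const, Finset.sum_comm]
  have hcard : (Finset.Icc 1 (d-1)).card = d - 1 := by rw [Nat.card_Icc]; omega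
  rw [hcard]
  have h1 : ∀ i ∈ Finset.univ (α := Fin n),
      ∑ j ∈ Finset.Icc 1 (d-1), Int.fract (-(j : ℚ) * (a i) / d)
        = ((d : ℚ) - Nat.gcd d (a i)) / 2 := fun i _ => key d (a i) hd (hpos i) (hlt i)
  rw [Finset.sum_congr rfl h1, ← Finset.sum_div, nsmul_eq_mul,
    Nat.cast_sub (show 1 ≤ d by omega)]
  push_cast
  ring
end

section
/- Let d ≥ 3 be odd and let k be an algebraically closed field with char(k) not dividing 2d. Fix t ∈ k with t ≠ 0, 1. Then the projective smooth curve with affine equation y^d = x(x-1)(x-t)^{d-1} is birationally equivalent to the hyperelliptic curve Y² = W^{2d} + (2 - 4t)W^d + 1, via the substitutions x = (Y + W^d + 1)/2 and y = (x - t)·W. -/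
/-- For odd `d ≥ 3`, `k` algebraically closed with `char k ∤ 2d`, and
`t ≠ 0, 1`, the curve `y^d = x(x-1)(x-t)^{d-1}` is birationally equivalent to the
hyperelliptic curve `Y² = W^{2d} + (2-4t)W^d + 1` via `x = (Y + W^d + 1)/2`, `y = (x-t)W`:
any point `(W, Y)` of the latter maps to a point `(x, y)` of the former. -/
theorem stmt13 (k : Type*) [Field k] [IsAlgClosed k] (d : ℕ) (hd : 3 ≤ d) (hodd : Odd d)
    (hchar : ¬ (ringChar k ∣ 2 * d)) (t : k) (ht0 : t ≠ 0) (ht1 : t ≠ 1)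
    (W Y : k) (hWY : Y ^ 2 = W ^ (2 * d) + (2 - 4 * t) * W ^ d + 1) :
    ∀ x y : k, x = (Y + W ^ d + 1) / 2 → y = (x - t) * W →
      y ^ d = x * (x - 1) * (x - t) ^ (d - 1) := by
  intro x y hx hy
  have h2 : (2 : k) ≠ 0 := by
    intro h
    exact hchar (dvd_mul_of_dvd_left (ringChar.dvd (by exact_mod_cast h)) d)
  have h4 : (4 : k) ≠ 0 := by
    intro h
    exact h2 (by have : (2:k) * 2 = 4 := by norm_num
                 exact (mul_self_eq_zero).mp (by rw [this, h]))
  have hu : x * 2 = Y + W ^ d + 1 := by rw [hx, div_mul_cancel₀ _ h2]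
  have key : x * (x - 1) = W ^ d * (x - t) := by
    apply mul_left_cancel₀ h4
    rw [two_mul, pow_add] at hWY
    linear_combination (2 * x + Y - W ^ d - 1) * hu + hWY
  have hd1 : d = (d - 1) + 1 := (Nat.succ_pred_eq_of_pos (by omega)).symm
  calc y ^ d = (x - t) ^ d * W ^ d := by rw [hy, mul_pow]
    _ = (x - t) ^ (d - 1) * ((x - t) * W ^ d) := by nth_rewrite 1 [hd1]; rw [pow_succ]; ring
    _ = x * (x - 1) * (x - t) ^ (d - 1) := by rw [mul_comm (x - t) (W ^ d), ← key]; ring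
end
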